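/- Let W ⊆ V_d be a P-submodule and suppose W(i) ≠ 0 for some 0 ≤ i < d. Write the p-adic expansion d − i = t_0 + t_1 p + ⋯ + t_m p^m with 0 ≤ t_j ≤ p−1. Then the subspace S^{t_0}(V_1)·F^{*}(S^{t_1}(V_1))·⋯·F^{m*}(S^{t_m}(V_1)) ⊗ z^i, i.e. the span of all products f_0·f_1^p·⋯·f_m^{p^m}·z^i with f_j ∈ S^{t_j}(V_1), is contained in W. -/

import Mathlib

/-!
The `P`-module `V_d` underlying the syzygy bundle on `P^n_k` (Trivedi).
`G = GL_{n+1}(k)` and `P ⊂ G` is the maximal parabolic subgroup (block upper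
triangular with blocks of sizes `1` and `n`) with `G/P ≅ P^n_k`; homogeneous
`G`-bundles on `P^n_k` correspond to finite dimensional `P`-modules.  Writing
`U₁` for the `k`-vector space with basis `x₁, …, x_n, z` (here the variables of
`MvPolynomial (Fin (n+1)) k`, with `z` the last variable) and
`V₁ = span(x₁, …, x_n)`, the group `P` acts on `U₁` by linear substitutions
preserving `V₁`, and hence on the degree-`d` polynomials `U_d = S^d(U₁)`.  The
`P`-module corresponding to the syzygy bundle `V_d` is
`V_d = ⊕_{i=0}^{d−1} S^{d−i}(V₁) ⊗ zⁱ ⊂ U_d`.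
-/

noncomputable section

open MvPolynomial

/-- The `P`-module `V_d = ⊕_{i=0}^{d-1} S^{d-i}(V₁)·zⁱ`: polynomials in
`x₁, …, x_n, z` all of whose monomials have total degree `d` and `z`-exponent
`< d`. -/
def VdMod (k : Type) [Field k] (n d : ℕ) :
    Submodule k (MvPolynomial (Fin (n + 1)) k) where
  carrier := {f | ∀ m ∈ f.support, (∑ j, m j) = d ∧ m (Fin.last n) < d}
  add_mem' := by
    intro f g hf hg m hm
    rcases Finset.mem_union.mp (MvPolynomial.support_add hm) with h | h
    · exact hf m h
    · exact hg m h
  zero_mem' := by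
    intro m hm
    simp at hm
  smul_mem' := by
    intro c f hf m hm
    exact hf m (MvPolynomial.support_smul hm)

/-- The subspace `(⋯)·zⁱ` of polynomials all of whose monomials have
`z`-exponent exactly `i`; thus `W ⊓ zSlice k n i` is the component
`W(i) = W ∩ (S^{d-i}(V₁) ⊗ zⁱ)` of a submodule `W ≤ V_d`. -/
def zSlice (k : Type) [Field k] (n i : ℕ) :
    Submodule k (MvPolynomial (Fin (n + 1)) k) where
  carrier := {f | ∀ m ∈ f.support, m (Fin.last n) = i}
  add_mem' := by
    intro f g hf hg m hm
    rcases Finset.mem_union.mp (MvPolynomial.support_add hm) with h | h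
    · exact hf m h
    · exact hg m h
  zero_mem' := by
    intro m hm
    simp at hm
  smul_mem' := by
    intro c f hf m hm
    exact hf m (MvPolynomial.support_smul hm)

/-- A matrix `M ∈ GL_{n+1}(k)` lies in (the image in `GL(U₁)` of) the maximal
parabolic `P` iff it is invertible and each `x`-variable is mapped into the span
of the `x`-variables (the substitution sends `X i ↦ ∑ j, M i j • X j`, so this
says `M i z = 0` for every `x`-index `i`); `z` itself may be sent to
`b·z + a₁x₁ + ⋯ + a_nx_n` with `b ≠ 0`. -/
def IsParabolicSubst {k : Type} [Field k] {n : ℕ}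
    (M : Matrix (Fin (n + 1)) (Fin (n + 1)) k) : Prop :=
  IsUnit M.det ∧ ∀ i : Fin (n + 1), i ≠ Fin.last n → M i (Fin.last n) = 0

/-- The algebra endomorphism of `k[x₁, …, x_n, z]` induced by the linear
substitution `X i ↦ ∑ j, M i j • X j`. -/
def substMap {k : Type} [Field k] {n : ℕ}
    (M : Matrix (Fin (n + 1)) (Fin (n + 1)) k) :
    MvPolynomial (Fin (n + 1)) k →ₐ[k] MvPolynomial (Fin (n + 1)) k :=
  MvPolynomial.aeval fun i => ∑ j, M i j • MvPolynomial.X j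

/-- `W` is a `P`-submodule of `V_d`: a `k`-subspace of `V_d` stable under all
parabolic substitutions. -/
def IsPSubmodule {k : Type} [Field k] {n : ℕ} (d : ℕ)
    (W : Submodule k (MvPolynomial (Fin (n + 1)) k)) : Prop :=
  W ≤ VdMod k n d ∧
    ∀ M : Matrix (Fin (n + 1)) (Fin (n + 1)) k,
      IsParabolicSubst M → ∀ f ∈ W, substMap M f ∈ W

/-- The `j`-th digit of the `p`-adic expansion of `i`. -/
def pDigit (p j i : ℕ) : ℕ := i / p ^ j % p

/-- `f` lies in `S^t(V₁)`: it is a polynomial in the `x`-variables only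
(no `z`), homogeneous of degree `t`. -/
def IsXHomog {k : Type} [Field k] {n : ℕ} (t : ℕ)
    (f : MvPolynomial (Fin (n + 1)) k) : Prop :=
  ∀ m ∈ f.support, m (Fin.last n) = 0 ∧ (∑ j, m j) = t

/-!
Diagonal matrices lie in `P`, and over the infinite field `k` their characters separate
monomials, so a `P`-stable subspace contains every monomial occurring in one of its elements.
A transvection `x_a ↦ x_a + x_b` (with `x_b ≠ z`) moves `e` units of exponent from `x_a` to
`x_b`, at the cost of the factor `(m_a + e).choose e`.  Emptying variables completely (factor
`1`) turns a monomial of `W(i)` into `x₀^{d-i} zⁱ`.  Writing `d - i = ∑ p^j t_j`, a chunk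
`∑ p^j a_j` with `a_j` bounded by the remaining digits leaves `x₀` without carries, so by
Lucas's theorem its factor is nonzero in `k`; this produces every monomial
`∏_j (x^{a_j})^{p^j} zⁱ` with `|a_j| = t_j`.  In characteristic `p` the product
`f₀ f₁^p ⋯ f_m^{p^m}` is a combination of exactly such monomials.
-/

theorem Nat.Prime.not_dvd_choose_of_lt {p t s : ℕ} (hp : p.Prime) (hs : s ≤ t) (ht : t < p) :
    ¬ p ∣ t.choose s := fun h =>
  (hp.dvd_factorial.mp (Nat.choose_mul_factorial_mul_factorial hs ▸
    (h.mul_right _).mul_right _)).not_gt ht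

theorem Finset.sum_range_succ_pow_mul (p M : ℕ) (x : ℕ → ℕ) :
    ∑ j ∈ range (M + 1), p ^ j * x j = x 0 + p * ∑ j ∈ range M, p ^ j * x (j + 1) := by
  rw [sum_range_succ', mul_sum, add_comm]
  simp [pow_succ', mul_assoc]

theorem Nat.Prime.not_dvd_choose_of_digits_add_lt {p : ℕ} (hp : p.Prime) (M : ℕ)
    (x y : ℕ → ℕ) (hxy : ∀ j < M, x j + y j < p) :
    ¬ p ∣ (∑ j ∈ Finset.range M, p ^ j * x j + ∑ j ∈ Finset.range M, p ^ j * y j).choose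
      (∑ j ∈ Finset.range M, p ^ j * y j) := by
  have := Fact.mk hp
  induction M generalizing x y with
  | zero => simpa using hp.not_dvd_one
  | succ M ih =>
    have hx₀y₀ := hxy 0 M.succ_pos
    have hy₀ : y 0 < p := by omega
    rw [Finset.sum_range_succ_pow_mul, Finset.sum_range_succ_pow_mul]
    set A := ∑ j ∈ Finset.range M, p ^ j * x (j + 1)
    set B := ∑ j ∈ Finset.range M, p ^ j * y (j + 1)
    rw [show x 0 + p * A + (y 0 + p * B) = x 0 + y 0 + p * (A + B) by ring,
      Choose.choose_modEq_choose_mod_mul_choose_div_nat.dvd_iff dvd_rfl]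
    simp only [Nat.add_mul_mod_self_left, Nat.add_mul_div_left _ _ hp.pos, Nat.mod_eq_of_lt hx₀y₀,
      Nat.mod_eq_of_lt hy₀, Nat.div_eq_of_lt hx₀y₀, Nat.div_eq_of_lt hy₀, zero_add, hp.dvd_mul,
      not_or]
    exact ⟨hp.not_dvd_choose_of_lt (Nat.le_add_left _ _) hx₀y₀,
      ih _ _ fun j hj => hxy (j + 1) (by omega)⟩

theorem sum_range_pow_mul_pDigit (p e M : ℕ) :
    ∑ j ∈ Finset.range M, p ^ j * pDigit p j e = e % p ^ M := by
  induction M with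
  | zero => simp [Nat.mod_one]
  | succ M ih => rw [Finset.sum_range_succ, ih, Nat.mod_pow_succ, pDigit]

theorem Fintype.sum_eq_add_sum_sdiff_pair_add {α β : Type*} [Fintype α] [DecidableEq α]
    [AddCommMonoid β] {o l : α} (h : o ≠ l) (f : α → β) :
    ∑ x, f x = f o + ∑ x ∈ Finset.univ \ {o, l}, f x + f l := by
  rw [← Finset.sum_sdiff (Finset.subset_univ {o, l}), Finset.sum_pair h, add_comm, add_assoc]
  abel

namespace MvPolynomial

theorem mem_of_forall_monomial_mem {σ R : Type*} [CommSemiring R]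
    {W : Submodule R (MvPolynomial σ R)} {f : MvPolynomial σ R}
    (h : ∀ m ∈ f.support, monomial m 1 ∈ W) : f ∈ W := by
  rw [f.as_sum]
  exact W.sum_mem fun m hm => by simpa [smul_monomial] using W.smul_mem (coeff m f) (h m hm)

theorem coeff_monomial_mul_X_add_X_pow {σ R : Type*} [CommSemiring R] {a b : σ} (hab : a ≠ b)
    (r : σ →₀ ℕ) (u v : ℕ) :
    coeff (r + Finsupp.single a u + Finsupp.single b v) (monomial r 1 * (X a + X b) ^ (u + v)) =
      ((u + v).choose u : R) := by
  classical
  have hterm : ∀ s, X a ^ s * X b ^ (u + v - s) * ((u + v).choose s : MvPolynomial σ R) =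
      monomial (Finsupp.single a s + Finsupp.single b (u + v - s)) ((u + v).choose s : R) := by
    intro s
    rw [X_pow_eq_monomial, X_pow_eq_monomial, ← map_natCast C, C_apply, monomial_mul,
      monomial_mul, add_zero, one_mul, one_mul]
  rw [add_assoc, coeff_monomial_mul, one_mul, add_pow, Finset.sum_congr rfl fun s _ => hterm s,
    coeff_sum, Finset.sum_eq_single_of_mem u (Finset.mem_range.mpr (by omega))]
  · rw [add_tsub_cancel_left, coeff_monomial, if_pos rfl]
  · intro s _ hsu
    rw [coeff_monomial, if_neg]
    intro h
    simpa [Finsupp.single_apply, hab.symm, hsu] using DFunLike.congr_fun h a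

theorem exists_eq_sum_of_mem_support_prod_pow {σ R : Type*} [CommSemiring R] {p : ℕ}
    [ExpChar R p] (g : ℕ → MvPolynomial σ R) (s : Finset ℕ) {m : σ →₀ ℕ}
    (hm : m ∈ (∏ j ∈ s, g j ^ p ^ j).support) :
    ∃ a : ℕ → σ →₀ ℕ, (∀ j ∈ s, a j ∈ (g j).support) ∧ m = ∑ j ∈ s, p ^ j • a j := by
  classical
  induction s using Finset.induction_on generalizing m with
  | empty =>
    rw [Finset.prod_empty, mem_support_iff, coeff_one] at hm
    simp only [ne_eq, ite_eq_right_iff, Classical.not_imp] at hm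
    exact ⟨0, by simp, by simpa using hm.1.symm⟩
  | insert j s hj ih =>
    rw [Finset.prod_insert hj] at hm
    obtain ⟨m₁, hm₁, m₂, hm₂, rfl⟩ := Finset.mem_add.mp (support_mul _ _ hm)
    rw [← map_iterateFrobenius_expand] at hm₁
    obtain ⟨b, hb, rfl⟩ :=
      Finset.mem_image.mp (support_expand_subset _ (support_map_subset _ _ hm₁))
    obtain ⟨a, ha, rfl⟩ := ih hm₂
    have hupdate : ∀ i ∈ s, Function.update a j b i = a i := fun i hi =>
      Function.update_of_ne (ne_of_mem_of_not_mem hi hj) _ _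
    refine ⟨Function.update a j b, fun i hi => ?_, ?_⟩
    · rcases Finset.mem_insert.mp hi with rfl | hi
      · simpa using hb
      · exact hupdate i hi ▸ ha i hi
    · rw [Finset.sum_insert hj, Function.update_self]
      exact congrArg _ (Finset.sum_congr rfl fun i hi => by rw [hupdate i hi])

end MvPolynomial

section ParabolicSubst

variable {k : Type} [Field k] {n : ℕ}

def IsParabolicStable (W : Submodule k (MvPolynomial (Fin (n + 1)) k)) : Prop :=
  ∀ M : Matrix (Fin (n + 1)) (Fin (n + 1)) k, IsParabolicSubst M → ∀ f ∈ W, substMap M f ∈ W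

theorem isParabolicSubst_diagonal {c : Fin (n + 1) → k} (hc : ∀ j, c j ≠ 0) :
    IsParabolicSubst (Matrix.diagonal c) :=
  ⟨by simpa [Matrix.det_diagonal, Finset.prod_ne_zero_iff] using hc,
    fun _ hi => Matrix.diagonal_apply_ne c hi⟩

theorem substMap_diagonal_monomial (c : Fin (n + 1) → k) (m : Fin (n + 1) →₀ ℕ) (a : k) :
    substMap (Matrix.diagonal c) (monomial m a) = monomial m ((∏ j, c j ^ m j) * a) := by
  have hX : ∀ i, ∑ j, Matrix.diagonal c i j • (X j : MvPolynomial (Fin (n + 1)) k) =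
      C (c i) * X i := fun i => by simp [Matrix.diagonal_apply, smul_eq_C_mul]
  simp only [substMap, aeval_monomial, hX, mul_pow, Finsupp.prod_mul, Finsupp.prod_pow,
    algebraMap_eq]
  rw [monomial_eq, Finsupp.prod_pow, map_mul, map_prod]
  simp only [map_pow]
  ring

theorem coeff_substMap_diagonal (c : Fin (n + 1) → k) (f : MvPolynomial (Fin (n + 1)) k)
    (m : Fin (n + 1) →₀ ℕ) :
    coeff m (substMap (Matrix.diagonal c) f) = (∏ j, c j ^ m j) * coeff m f := by
  induction f using MvPolynomial.induction_on' with
  | monomial m' a =>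
    rw [substMap_diagonal_monomial, coeff_monomial, coeff_monomial]
    split_ifs with h
    · rw [h]
    · rw [mul_zero]
  | add f g hf hg => rw [map_add, coeff_add, coeff_add, hf, hg, mul_add]

theorem exists_prod_pow_ne [Infinite k] {m m' : Fin (n + 1) →₀ ℕ} (h : m ≠ m') :
    ∃ c : Fin (n + 1) → k, (∀ j, c j ≠ 0) ∧ ∏ j, c j ^ m j ≠ ∏ j, c j ^ m' j := by
  obtain ⟨j₀, hj₀⟩ := Finsupp.ne_iff.mp h
  by_contra! H
  have hprod : ∀ (t : k) (m'' : Fin (n + 1) →₀ ℕ),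
      ∏ j, (if j = j₀ then t else 1) ^ m'' j = t ^ m'' j₀ := fun t m'' => by
    rw [Fintype.prod_eq_single j₀ fun j hj => by simp [hj], if_pos rfl]
  have hpow : ∀ t : k, t ≠ 0 → t ^ m j₀ = t ^ m' j₀ := fun t ht => by
    simpa [hprod] using H (fun j => if j = j₀ then t else 1) fun j => by split_ifs <;> simp [ht]
  have hX : (Polynomial.X ^ m j₀ : Polynomial k) = Polynomial.X ^ m' j₀ :=
    Polynomial.eq_of_infinite_eval_eq _ _ <| (Set.finite_singleton (0 : k)).infinite_compl.mono
      fun t ht => by simpa using hpow t ht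
  exact hj₀ (by simpa using congrArg Polynomial.natDegree hX)

theorem isParabolicSubst_transvection {a b : Fin (n + 1)} (hab : a ≠ b) (hb : b ≠ Fin.last n)
    (c : k) : IsParabolicSubst (Matrix.transvection a b c) := by
  refine ⟨by simp [Matrix.det_transvection_of_ne a b hab], fun i hi => ?_⟩
  simp [Matrix.transvection, Matrix.one_apply_ne hi, hb]

theorem substMap_transvection_X (a b : Fin (n + 1)) (c : k) (i : Fin (n + 1)) :
    substMap (Matrix.transvection a b c) (X i) = X i + if i = a then c • X b else 0 := by
  simp [substMap, Matrix.transvection, add_smul, Finset.sum_add_distrib, Matrix.one_apply,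
    Matrix.single_apply, ite_and, eq_comm]

theorem substMap_transvection_monomial {a : Fin (n + 1)} (b : Fin (n + 1)) (c : k)
    {r : Fin (n + 1) →₀ ℕ} (hr : r a = 0) (e : ℕ) :
    substMap (Matrix.transvection a b c) (monomial (r + Finsupp.single a e) 1) =
      monomial r 1 * (X a + c • X b) ^ e := by
  have hfix : substMap (Matrix.transvection a b c) (monomial r 1) = monomial r 1 := by
    rw [monomial_eq, map_one, one_mul, Finsupp.prod, map_prod]
    refine Finset.prod_congr rfl fun i hi => ?_
    have hia : i ≠ a := fun h => Finsupp.mem_support_iff.mp hi (h ▸ hr)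
    rw [map_pow, substMap_transvection_X, if_neg hia, add_zero]
  rw [← one_mul (1 : k), ← monomial_mul, ← X_pow_eq_monomial, map_mul, hfix, map_pow,
    substMap_transvection_X, if_pos rfl, mul_one]

end ParabolicSubst

namespace IsParabolicStable

open Finsupp (single)

variable {k : Type} [Field k] [Infinite k] {n : ℕ}
  {W : Submodule k (MvPolynomial (Fin (n + 1)) k)}

theorem monomial_mem_of_mem_support (hW : IsParabolicStable W)
    {f : MvPolynomial (Fin (n + 1)) k} (hf : f ∈ W) {m : Fin (n + 1) →₀ ℕ}
    (hm : m ∈ f.support) : monomial m 1 ∈ W := by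
  induction h : f.support.card using Nat.strong_induction_on generalizing f with
  | _ N ih =>
  by_cases hone : ∀ m' ∈ f.support, m' = m
  · have hfm : f = monomial m (coeff m f) := by
      ext m'
      rw [coeff_monomial]
      split_ifs with hmm'
      · rw [hmm']
      · exact notMem_support_iff.mp fun h' => hmm' (hone m' h').symm
    have hc : coeff m f ≠ 0 := mem_support_iff.mp hm
    have h1 : monomial m (1 : k) = (coeff m f)⁻¹ • monomial m (coeff m f) := by
      rw [smul_monomial, smul_eq_mul, inv_mul_cancel₀ hc]
    rw [h1, ← hfm]
    exact W.smul_mem _ hf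
  obtain ⟨m', hm', hne⟩ : ∃ m' ∈ f.support, m' ≠ m := by simpa using hone
  obtain ⟨c, hc, hcm⟩ := exists_prod_pow_ne (k := k) hne.symm
  -- `g` kills the `m'`-term of `f` and keeps the `m`-term
  set g := substMap (Matrix.diagonal c) f - (∏ j, c j ^ m' j) • f
  have hg : g ∈ W := W.sub_mem (hW _ (isParabolicSubst_diagonal hc) f hf) (W.smul_mem _ hf)
  have hcoeff : ∀ m'', coeff m'' g = (∏ j, c j ^ m'' j - ∏ j, c j ^ m' j) * coeff m'' f :=
    fun m'' => by rw [coeff_sub, coeff_substMap_diagonal, coeff_smul, smul_eq_mul, sub_mul]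
  have hsub : g.support ⊆ f.support.erase m' := fun m'' hm'' => by
    rw [mem_support_iff, hcoeff] at hm''
    refine Finset.mem_erase.mpr ⟨fun he => hm'' (by rw [he, sub_self, zero_mul]), ?_⟩
    exact mem_support_iff.mpr (right_ne_zero_of_mul hm'')
  refine ih _ ?_ hg ?_ rfl
  · exact h ▸ (Finset.card_le_card hsub).trans_lt (Finset.card_erase_lt_of_mem hm')
  · rw [mem_support_iff, hcoeff]
    exact mul_ne_zero (sub_ne_zero.mpr hcm) (mem_support_iff.mp hm)

theorem monomial_add_single_mem (hW : IsParabolicStable W) {a b : Fin (n + 1)} (hab : a ≠ b)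
    (hb : b ≠ Fin.last n) {m : Fin (n + 1) →₀ ℕ} {e : ℕ}
    (hm : monomial (m + single a e) 1 ∈ W) (he : ((m a + e).choose e : k) ≠ 0) :
    monomial (m + single b e) 1 ∈ W := by
  have hr : (m.erase a) a = 0 := Finsupp.erase_same
  have hsplit : m = m.erase a + single a (m a) := (Finsupp.erase_add_single a m).symm
  have himage := hW _ (isParabolicSubst_transvection hab hb 1) _ hm
  rw [hsplit, add_assoc, ← Finsupp.single_add, substMap_transvection_monomial b 1 hr,
    one_smul] at himage
  refine hW.monomial_mem_of_mem_support himage ?_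
  rw [mem_support_iff]
  nth_rw 1 [hsplit]
  rwa [coeff_monomial_mul_X_add_X_pow hab, Nat.choose_symm_add]

theorem monomial_single_add_mem_of_sum_single (hW : IsParabolicStable W) {o : Fin (n + 1)}
    (ho : o ≠ Fin.last n) {r : Fin (n + 1) →₀ ℕ} (g : Fin (n + 1) → ℕ)
    (s : Finset (Fin (n + 1))) (hos : o ∉ s) (hr : ∀ v ∈ s, r v = 0) (c : ℕ)
    (hc : monomial (single o c + ∑ v ∈ s, single v (g v) + r) 1 ∈ W) :
    monomial (single o (c + ∑ v ∈ s, g v) + r) 1 ∈ W := by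
  classical
  induction s using Finset.induction_on generalizing c with
  | empty => simpa using hc
  | insert v s hvs ih =>
    have hov : o ≠ v := fun h => hos (h ▸ Finset.mem_insert_self v s)
    set m := single o c + ∑ w ∈ s, single w (g w) + r with hm
    -- `x_v` is emptied completely, so the binomial factor is `1`
    have hmv : m v = 0 := by
      simp [m, Finsupp.single_apply, hov, hvs, hr v (Finset.mem_insert_self v s)]
    have hmoved := hW.monomial_add_single_mem hov.symm ho (m := m) (e := g v)
      (by convert hc using 3; rw [Finset.sum_insert hvs, hm]; abel) (by simp [hmv])
    rw [show m + single o (g v) = single o (c + g v) + ∑ w ∈ s, single w (g w) + r by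
      rw [Finsupp.single_add, hm]; abel] at hmoved
    rw [Finset.sum_insert hvs, ← add_assoc]
    exact ih (fun h => hos (Finset.mem_insert_of_mem h))
      (fun w hw => hr w (Finset.mem_insert_of_mem hw)) _ hmoved

theorem monomial_sum_single_mem_of_single {p : ℕ} [CharP k p] (hW : IsParabolicStable W)
    (hp : p.Prime) {o : Fin (n + 1)} {r : Fin (n + 1) →₀ ℕ} (hr : r o = 0) (M : ℕ)
    (a : ℕ → Fin (n + 1) →₀ ℕ) (s : Finset (Fin (n + 1))) (hos : o ∉ s)
    (hs : Fin.last n ∉ s) (c : ℕ → ℕ) (hlt : ∀ j < M, c j + ∑ v ∈ s, a j v < p)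
    (hc : monomial (single o (∑ j ∈ Finset.range M, p ^ j * (c j + ∑ v ∈ s, a j v)) + r) 1 ∈ W) :
    monomial (single o (∑ j ∈ Finset.range M, p ^ j * c j) +
      ∑ v ∈ s, single v (∑ j ∈ Finset.range M, p ^ j * a j v) + r) 1 ∈ W := by
  classical
  induction s using Finset.induction_on generalizing c with
  | empty => simpa using hc
  | insert v s hvs ih =>
    have hov : o ≠ v := fun h => hos (h ▸ Finset.mem_insert_self v s)
    have hvL : v ≠ Fin.last n := fun h => hs (h ▸ Finset.mem_insert_self v s)
    have hos' : o ∉ s := fun h => hos (Finset.mem_insert_of_mem h)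
    simp only [Finset.sum_insert hvs, ← add_assoc] at hlt hc ⊢
    have hih := ih hos' (fun h => hs (Finset.mem_insert_of_mem h)) (fun j => c j + a j v) hlt hc
    set e := ∑ j ∈ Finset.range M, p ^ j * a j v
    set m := single o (∑ j ∈ Finset.range M, p ^ j * c j) +
      ∑ w ∈ s, single w (∑ j ∈ Finset.range M, p ^ j * a j w) + r with hm
    have hmo : m o = ∑ j ∈ Finset.range M, p ^ j * c j := by
      simp [m, Finsupp.single_apply, hr, hos']
    have hmoved := hW.monomial_add_single_mem hov hvL (m := m) (e := e)
      (by
        convert hih using 3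
        simp only [hm, e, mul_add, Finset.sum_add_distrib, Finsupp.single_add]
        abel)
      (by
        rw [hmo, Ne, CharP.cast_eq_zero_iff k p]
        exact hp.not_dvd_choose_of_digits_add_lt M c (fun j => a j v) fun j hj => by
          have := hlt j hj
          omega)
    convert hmoved using 3
    rw [hm]
    abel

theorem monomial_single_add_single_last_mem (hW : IsParabolicStable W) {o : Fin (n + 1)}
    (ho : o ≠ Fin.last n) {m : Fin (n + 1) →₀ ℕ} (hm : monomial m 1 ∈ W) :
    monomial (single o (m.degree - m (Fin.last n)) + single (Fin.last n) (m (Fin.last n))) 1 ∈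
      W := by
  classical
  have hm' := Fintype.sum_eq_add_sum_sdiff_pair_add ho fun v => single v (m v)
  rw [Finsupp.univ_sum_single] at hm'
  have hdeg : m.degree - m (Fin.last n) = m o + ∑ v ∈ Finset.univ \ {o, Fin.last n}, m v := by
    rw [Finsupp.degree_eq_sum, Fintype.sum_eq_add_sum_sdiff_pair_add ho]
    omega
  rw [hdeg]
  refine hW.monomial_single_add_mem_of_sum_single ho m _ (by simp) (fun v hv => ?_) _ (hm' ▸ hm)
  simp only [Finset.mem_sdiff, Finset.mem_insert, Finset.mem_singleton, not_or] at hv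
  exact Finsupp.single_eq_of_ne hv.2.2

theorem monomial_sum_pow_smul_add_single_last_mem {p : ℕ} [CharP k p]
    (hW : IsParabolicStable W) (hp : p.Prime) {o : Fin (n + 1)} (ho : o ≠ Fin.last n) {e i M : ℕ}
    (he : e < p ^ M) (hc : monomial (single o e + single (Fin.last n) i) 1 ∈ W)
    (a : ℕ → Fin (n + 1) →₀ ℕ)
    (ha : ∀ j < M, a j (Fin.last n) = 0 ∧ ∑ u, a j u = pDigit p j e) :
    monomial (∑ j ∈ Finset.range M, p ^ j • a j + single (Fin.last n) i) 1 ∈ W := by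
  classical
  set s := Finset.univ \ {o, Fin.last n}
  have hdigit : ∀ j < M, a j o + ∑ v ∈ s, a j v = pDigit p j e := fun j hj => by
    have := Fintype.sum_eq_add_sum_sdiff_pair_add ho (a j)
    rw [(ha j hj).1, (ha j hj).2, add_zero] at this
    exact this.symm
  have hsplit : ∑ j ∈ Finset.range M, p ^ j • a j =
      single o (∑ j ∈ Finset.range M, p ^ j * a j o) +
        ∑ v ∈ s, single v (∑ j ∈ Finset.range M, p ^ j * a j v) := by
    have hlast : (∑ j ∈ Finset.range M, p ^ j • a j) (Fin.last n) = 0 := by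
      rw [Finsupp.finsetSum_apply]
      exact Finset.sum_eq_zero fun j hj => by simp [(ha j (Finset.mem_range.mp hj)).1]
    rw [← Finsupp.univ_sum_single (∑ j ∈ Finset.range M, p ^ j • a j),
      Fintype.sum_eq_add_sum_sdiff_pair_add ho, hlast, Finsupp.single_zero, add_zero]
    simp [Finsupp.finsetSum_apply, s]
  rw [hsplit]
  refine hW.monomial_sum_single_mem_of_single hp (by simp [ho]) M a s (by simp [s]) (by simp [s])
    (fun j => a j o) (fun j hj => hdigit j hj ▸ Nat.mod_lt _ hp.pos) ?_
  rwa [Finset.sum_congr rfl fun j hj => by rw [hdigit j (Finset.mem_range.mp hj)],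
    sum_range_pow_mul_pDigit, Nat.mod_eq_of_lt he]

end IsParabolicStable

theorem P_submodule_contains_Frobenius_span_general
    (k : Type) [Field k] [IsAlgClosed k] (p n d : ℕ) [CharP k p]
    (hp : 0 < p) (hn : 2 ≤ n)
    (W : Submodule k (MvPolynomial (Fin (n + 1)) k))
    (hW : IsPSubmodule d W)
    (i : ℕ)
    (hWi : ∃ f : MvPolynomial (Fin (n + 1)) k,
      f ∈ W ∧ f ≠ 0 ∧ ∀ m ∈ f.support, m (Fin.last n) = i)
    (M : ℕ) (hM : d - i < p ^ M)
    (g : ℕ → MvPolynomial (Fin (n + 1)) k)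
    (hg : ∀ j < M, IsXHomog (pDigit p j (d - i)) (g j)) :
    (∏ j ∈ Finset.range M, g j ^ p ^ j) * MvPolynomial.X (Fin.last n) ^ i ∈ W := by
  obtain ⟨hVd, hWst : IsParabolicStable W⟩ := hW
  have : NeZero p := NeZero.of_pos hp
  have hprime : Fact p.Prime := CharP.char_is_prime_of_pos k p
  have h0L : (0 : Fin (n + 1)) ≠ Fin.last n := fun h => by
    rw [Fin.ext_iff, Fin.val_zero, Fin.val_last] at h
    omega
  obtain ⟨f, hfW, hf0, hfi⟩ := hWi
  obtain ⟨m, hm⟩ := support_nonempty.mpr hf0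
  have hx₀ := hWst.monomial_single_add_single_last_mem h0L (hWst.monomial_mem_of_mem_support hfW hm)
  rw [Finsupp.degree_eq_sum, (hVd hfW m hm).1, hfi m hm] at hx₀
  refine mem_of_forall_monomial_mem fun m' hm' => ?_
  obtain ⟨m₁, hm₁, m₂, hm₂, rfl⟩ := Finset.mem_add.mp (support_mul _ _ hm')
  rw [support_X_pow, Finset.mem_singleton] at hm₂
  obtain ⟨a, ha, rfl⟩ := exists_eq_sum_of_mem_support_prod_pow g _ hm₁
  exact hm₂ ▸ hWst.monomial_sum_pow_smul_add_single_last_mem hprime.out h0L hM hx₀ a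
    fun j hj => hg j hj _ (ha j (Finset.mem_range.mpr hj))

/-- Let `W ⊆ V_d` be a `P`-submodule with
`W(i) = W ∩ (S^{d−i}(V₁) ⊗ zⁱ) ≠ 0` for some `0 ≤ i < d`.  Write the `p`-adic
expansion `d − i = t₀ + t₁p + ⋯ + tₘpᵐ` (`0 ≤ t_j ≤ p−1`).  Then the subspace
`S^{t₀}(V₁)·F^*(S^{t₁}(V₁))·⋯·F^{m*}(S^{tₘ}(V₁)) ⊗ zⁱ`, i.e. the span of all
products `f₀·f₁^p·⋯·fₘ^{pᵐ}·zⁱ` with `f_j ∈ S^{t_j}(V₁)`, is contained in `W`;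
equivalently, every such product lies in `W`. -/
theorem P_submodule_contains_Frobenius_span
    (k : Type) [Field k] [IsAlgClosed k] (p n d : ℕ) [CharP k p]
    (hp : 0 < p) (hn : 2 ≤ n)
    (W : Submodule k (MvPolynomial (Fin (n + 1)) k))
    (hW : IsPSubmodule d W)
    (i : ℕ) (hid : i < d)
    (hWi : ∃ f : MvPolynomial (Fin (n + 1)) k,
      f ∈ W ∧ f ≠ 0 ∧ ∀ m ∈ f.support, m (Fin.last n) = i)
    (M : ℕ) (hM : d - i < p ^ M)
    (g : ℕ → MvPolynomial (Fin (n + 1)) k)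
    (hg : ∀ j < M, IsXHomog (pDigit p j (d - i)) (g j)) :
    (∏ j ∈ Finset.range M, g j ^ p ^ j) * MvPolynomial.X (Fin.last n) ^ i ∈ W :=
  P_submodule_contains_Frobenius_span_general k p n d hp hn W hW i hWi M hM g hg
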